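/- Let 2 ≤ p < ∞ and set sin_p := sin_{p,p} and π_p := π_{p,p}. Then for all real x ≠ 0, (π_p² − x²)/(π_p² + x²) ≤ (sin_p x)/x. -/

import Mathlib

/-!
For `p, q ≥ 2` the integrand of `F_{p,q}` lies between `1` and `(1 - t²)^(-1/2)`, so
`s ≤ F_{p,q}(s) ≤ arcsin s` on `[0, 1]`. Hence `2 ≤ π_{p,q} ≤ π`, `sin x ≤ sin_{p,q} x` on
`[0, π/2]` and `sin_{p,q} x ≤ x`. On `[0, π_{p,q}]` this reduces the inequality, through
`sin x` resp. `sin (π_{p,q} - x)` and the Taylor bound `x - x³/6 + x⁵/120 - x⁷/5040 ≤ sin x`,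
to polynomial inequalities in `x` and `a = π_{p,q} ∈ [2, 3.15]`. Beyond `π_{p,q}` the crude bound
`π_{p,q} - x ≤ sin_{p,q} x` suffices, and negative `x` follow by oddness.
-/

open Real Set

/-- `F_{p,q}(x) = ∫₀ˣ (1 - t^q)^{-1/p} dt`. -/
noncomputable def genF (p q : ℝ) (x : ℝ) : ℝ :=
  ∫ t in (0:ℝ)..x, (1 - t ^ q) ^ (-(1 / p))

/-- The generalized π: `π_{p,q} = 2 F_{p,q}(1)`. -/
noncomputable def genPi (p q : ℝ) : ℝ := 2 * genF p q 1

/-- The inverse function of `F_{p,q} : [0,1] → [0, π_{p,q}/2]`;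
for `x ∈ [0, π_{p,q}/2]` this is exactly `F_{p,q}⁻¹(x)` since `F_{p,q}`
is a continuous strictly increasing bijection of `[0,1]` onto `[0, π_{p,q}/2]`. -/
noncomputable def sinBase (p q : ℝ) (x : ℝ) : ℝ :=
  sSup {s : ℝ | s ∈ Icc (0:ℝ) 1 ∧ genF p q s ≤ x}

/-- `sin_{p,q}` on `[0, π_{p,q}]`: equals `F_{p,q}⁻¹` on `[0, π_{p,q}/2]` and is
extended to `(π_{p,q}/2, π_{p,q}]` by `sin_{p,q}(π_{p,q} - x)`. -/
noncomputable def sinHalf (p q : ℝ) (x : ℝ) : ℝ :=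
  if x ≤ genPi p q / 2 then sinBase p q x else sinBase p q (genPi p q - x)

/-- `sin_{p,q}` on all of `ℝ`: the odd `2π_{p,q}`-periodic continuation. -/
noncomputable def genSin (p q : ℝ) (x : ℝ) : ℝ :=
  let a := genPi p q
  let y := x - 2 * a * (⌊x / (2 * a)⌋ : ℝ)
  if y ≤ a then sinHalf p q y else -(sinHalf p q (2 * a - y))

/-- `cos_{p,q} x = (sin_{p,q} x)'`. -/
noncomputable def genCos (p q : ℝ) (x : ℝ) : ℝ := deriv (genSin p q) x

open MeasureTheory

lemma nonneg_of_map_zero_of_deriv_nonneg {f : ℝ → ℝ} (hf : Differentiable ℝ f) (h0 : f 0 = 0)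
    (hf' : ∀ t, 0 < t → 0 ≤ deriv f t) {x : ℝ} (hx : 0 ≤ x) : 0 ≤ f x :=
  h0 ▸ monotoneOn_of_deriv_nonneg (convex_Ici 0) hf.continuous.continuousOn
    hf.differentiableOn (by simpa [interior_Ici] using hf') self_mem_Ici hx hx

lemma cos_le_taylor4 {x : ℝ} (hx : 0 ≤ x) : cos x ≤ 1 - x ^ 2 / 2 + x ^ 4 / 24 := by
  have := nonneg_of_map_zero_of_deriv_nonneg (f := fun t => 1 - t ^ 2 / 2 + t ^ 4 / 24 - cos t)
    (by fun_prop) (by simp) (fun t ht => by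
      simp (disch := fun_prop)
      nlinarith [sin_ge_sub_cube ht.le]) hx
  linarith

lemma sin_le_taylor5 {x : ℝ} (hx : 0 ≤ x) : sin x ≤ x - x ^ 3 / 6 + x ^ 5 / 120 := by
  have := nonneg_of_map_zero_of_deriv_nonneg (f := fun t => t - t ^ 3 / 6 + t ^ 5 / 120 - sin t)
    (by fun_prop) (by simp) (fun t ht => by
      simp (disch := fun_prop)
      nlinarith [cos_le_taylor4 ht.le]) hx
  linarith

lemma taylor6_le_cos {x : ℝ} (hx : 0 ≤ x) : 1 - x ^ 2 / 2 + x ^ 4 / 24 - x ^ 6 / 720 ≤ cos x := by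
  have := nonneg_of_map_zero_of_deriv_nonneg
    (f := fun t => cos t - (1 - t ^ 2 / 2 + t ^ 4 / 24 - t ^ 6 / 720))
    (by fun_prop) (by simp) (fun t ht => by
      simp (disch := fun_prop)
      nlinarith [sin_le_taylor5 ht.le]) hx
  linarith

lemma taylor7_le_sin {x : ℝ} (hx : 0 ≤ x) :
    x - x ^ 3 / 6 + x ^ 5 / 120 - x ^ 7 / 5040 ≤ sin x := by
  have := nonneg_of_map_zero_of_deriv_nonneg
    (f := fun t => sin t - (t - t ^ 3 / 6 + t ^ 5 / 120 - t ^ 7 / 5040))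
    (by fun_prop) (by simp) (fun t ht => by
      simp (disch := fun_prop)
      nlinarith [taylor6_le_cos ht.le]) hx
  linarith

section Integrand

variable {p q s t : ℝ}

lemma one_le_integrand (hp : 0 ≤ p) (hq : 0 < q) (ht0 : 0 ≤ t) (ht1 : t < 1) :
    1 ≤ (1 - t ^ q) ^ (-(1 / p)) := by
  have htq : t ^ q < 1 := rpow_lt_one ht0 ht1 hq
  exact one_le_rpow_of_pos_of_le_one_of_nonpos (by linarith)
    (by linarith [rpow_nonneg ht0 q]) (by simpa using by positivity)

lemma integrand_le_one_div_sqrt (hp : 2 ≤ p) (hq : 2 ≤ q) (ht0 : 0 ≤ t) (ht1 : t ≤ 1) :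
    (1 - t ^ q) ^ (-(1 / p)) ≤ 1 / √(1 - t ^ 2) := by
  obtain ht1 | rfl := ht1.lt_or_eq
  swap
  · rw [one_rpow, sub_self, zero_rpow (by simp; positivity)]
    simp
  have ht2 : t ^ 2 < 1 := by nlinarith
  have htq : t ^ q ≤ t ^ 2 := by
    simpa using rpow_le_rpow_of_exponent_ge' ht0 ht1.le zero_le_two hq
  have hinv : 1 / p ≤ 1 / 2 := one_div_le_one_div_of_le two_pos hp
  calc (1 - t ^ q) ^ (-(1 / p)) ≤ (1 - t ^ 2) ^ (-(1 / p)) :=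
        rpow_le_rpow_of_nonpos (by linarith) (by linarith) (by simp; positivity)
    _ ≤ (1 - t ^ 2) ^ (-(1 / 2 : ℝ)) :=
        rpow_le_rpow_of_exponent_ge (by linarith) (by linarith [sq_nonneg t]) (by linarith)
    _ = 1 / √(1 - t ^ 2) := by rw [rpow_neg (by linarith), sqrt_eq_rpow, one_div (_ ^ _)]

lemma intervalIntegrable_one_div_sqrt_one_sub_sq (hs0 : 0 ≤ s) (hs1 : s ≤ 1) :
    IntervalIntegrable (fun t => 1 / √(1 - t ^ 2)) volume 0 s := by
  refine intervalIntegral.intervalIntegrable_deriv_of_nonneg continuous_arcsin.continuousOn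
    (fun t ht => ?_) (fun t _ => by positivity)
  simp only [hs0, min_eq_left, max_eq_right, mem_Ioo] at ht
  exact hasDerivAt_arcsin (by linarith) (by linarith)

lemma integral_one_div_sqrt_one_sub_sq (hs0 : 0 ≤ s) (hs1 : s ≤ 1) :
    ∫ t in 0..s, 1 / √(1 - t ^ 2) = arcsin s := by
  rw [intervalIntegral.integral_eq_sub_of_hasDerivAt_of_le hs0 continuous_arcsin.continuousOn
    (fun t ht => hasDerivAt_arcsin (by linarith [ht.1]) (by linarith [ht.2]))
    (intervalIntegrable_one_div_sqrt_one_sub_sq hs0 hs1), arcsin_zero, sub_zero]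

lemma intervalIntegrable_integrand (hp : 2 ≤ p) (hq : 2 ≤ q) (hs0 : 0 ≤ s) (hs1 : s ≤ 1) :
    IntervalIntegrable (fun t => (1 - t ^ q) ^ (-(1 / p))) volume 0 s := by
  refine (intervalIntegrable_one_div_sqrt_one_sub_sq hs0 hs1).mono_fun
    (by fun_prop : Measurable fun t : ℝ => (1 - t ^ q) ^ (-(1 / p))).aestronglyMeasurable ?_
  refine ae_restrict_of_forall_mem measurableSet_uIoc fun t ht => ?_
  rw [uIoc_of_le hs0] at ht
  have htq : t ^ q ≤ 1 := rpow_le_one ht.1.le (ht.2.trans hs1) (by linarith)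
  have hbase : 0 ≤ 1 - t ^ q := by linarith
  dsimp only
  rw [norm_of_nonneg (rpow_nonneg hbase _), norm_of_nonneg (by positivity)]
  exact integrand_le_one_div_sqrt hp hq ht.1.le (ht.2.trans hs1)

end Integrand

section GenF

variable {p q s : ℝ}

lemma genF_le_arcsin (hp : 2 ≤ p) (hq : 2 ≤ q) (hs0 : 0 ≤ s) (hs1 : s ≤ 1) :
    genF p q s ≤ arcsin s := by
  rw [← integral_one_div_sqrt_one_sub_sq hs0 hs1]
  exact intervalIntegral.integral_mono_on_of_le_Ioo hs0 (intervalIntegrable_integrand hp hq hs0 hs1)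
    (intervalIntegrable_one_div_sqrt_one_sub_sq hs0 hs1)
    fun t ht => integrand_le_one_div_sqrt hp hq ht.1.le (ht.2.le.trans hs1)

lemma le_genF (hp : 2 ≤ p) (hq : 2 ≤ q) (hs0 : 0 ≤ s) (hs1 : s ≤ 1) : s ≤ genF p q s :=
  calc s = ∫ _ in 0..s, (1 : ℝ) := by simp
    _ ≤ genF p q s := intervalIntegral.integral_mono_on_of_le_Ioo hs0 intervalIntegrable_const
        (intervalIntegrable_integrand hp hq hs0 hs1)
        fun t ht => one_le_integrand (by linarith) (by linarith) ht.1.le (ht.2.trans_le hs1)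

lemma two_le_genPi (hp : 2 ≤ p) (hq : 2 ≤ q) : 2 ≤ genPi p q := by
  have := le_genF hp hq zero_le_one le_rfl
  rw [genPi]
  linarith

lemma genPi_le_pi (hp : 2 ≤ p) (hq : 2 ≤ q) : genPi p q ≤ π := by
  have := genF_le_arcsin hp hq zero_le_one le_rfl
  rw [arcsin_one] at this
  rw [genPi]
  linarith

end GenF

section SinBase

variable {p q x : ℝ}

lemma sinBase_nonneg : 0 ≤ sinBase p q x :=
  Real.sSup_nonneg fun _ hs => hs.1.1

lemma sinBase_le_one : sinBase p q x ≤ 1 :=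
  Real.sSup_le (fun _ hs => hs.1.2) zero_le_one

lemma le_sinBase {s : ℝ} (hs0 : 0 ≤ s) (hs1 : s ≤ 1) (h : genF p q s ≤ x) : s ≤ sinBase p q x :=
  le_csSup ⟨1, fun _ hr => hr.1.2⟩ ⟨⟨hs0, hs1⟩, h⟩

lemma sinBase_le_self (hp : 2 ≤ p) (hq : 2 ≤ q) (hx : 0 ≤ x) : sinBase p q x ≤ x :=
  Real.sSup_le (fun _ hs => (le_genF hp hq hs.1.1 hs.1.2).trans hs.2) hx

lemma sinBase_zero (hp : 2 ≤ p) (hq : 2 ≤ q) : sinBase p q 0 = 0 :=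
  (sinBase_le_self hp hq le_rfl).antisymm sinBase_nonneg

lemma sin_le_sinBase (hp : 2 ≤ p) (hq : 2 ≤ q) (hx0 : 0 ≤ x) (hx : x ≤ π / 2) :
    sin x ≤ sinBase p q x := by
  have hsin0 : 0 ≤ sin x := sin_nonneg_of_nonneg_of_le_pi hx0 (by linarith [pi_pos])
  refine le_sinBase hsin0 (sin_le_one x) ?_
  calc genF p q (sin x) ≤ arcsin (sin x) := genF_le_arcsin hp hq hsin0 (sin_le_one x)
    _ = x := arcsin_sin (by linarith [pi_pos]) hx

lemma sinHalf_nonneg : 0 ≤ sinHalf p q x := by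
  unfold sinHalf
  split_ifs <;> exact sinBase_nonneg

lemma sinHalf_le_one : sinHalf p q x ≤ 1 := by
  unfold sinHalf
  split_ifs <;> exact sinBase_le_one

end SinBase

section GenSin

variable {p q x : ℝ}

lemma neg_one_le_genSin : -1 ≤ genSin p q x := by
  unfold genSin
  dsimp only
  split_ifs
  · exact (neg_nonpos.2 zero_le_one).trans sinHalf_nonneg
  · exact neg_le_neg sinHalf_le_one

lemma genSin_of_mem_Icc (ha : 0 < genPi p q) (hx0 : 0 ≤ x) (hx : x ≤ genPi p q) :
    genSin p q x = sinHalf p q x := by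
  have hfloor : ⌊x / (2 * genPi p q)⌋ = 0 :=
    Int.floor_eq_zero_iff.2 ⟨by positivity, (div_lt_one (by positivity)).2 (by linarith)⟩
  simp [genSin, hfloor, hx]

lemma genSin_of_mem_Ioo (hx0 : genPi p q < x) (hx : x < 2 * genPi p q) :
    genSin p q x = -sinHalf p q (2 * genPi p q - x) := by
  have hfloor : ⌊x / (2 * genPi p q)⌋ = 0 :=
    Int.floor_eq_zero_iff.2 ⟨div_nonneg (by linarith) (by linarith),
      (div_lt_one (by linarith)).2 hx⟩
  simp [genSin, hfloor, hx0.not_ge]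

lemma genSin_neg (ha : 0 < genPi p q) (h0 : sinBase p q 0 = 0) :
    genSin p q (-x) = -genSin p q x := by
  set a := genPi p q with ha_def
  have hHalf0 : sinHalf p q 0 = 0 := by rw [sinHalf, if_pos (half_pos ha).le, h0]
  have hHalfa : sinHalf p q a = 0 := by
    rw [sinHalf, if_neg (not_le.2 (half_lt_self ha)), sub_self, h0]
  have hfract (z : ℝ) : z - 2 * a * ⌊z / (2 * a)⌋ = 2 * a * Int.fract (z / (2 * a)) := by
    rw [Int.fract]
    field_simp
  simp only [genSin, ← ha_def, hfract]
  rw [neg_div]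
  obtain hu | hu := eq_or_ne (Int.fract (x / (2 * a))) 0
  · simp [Int.fract_neg_eq_zero.2 hu, hu, ha.le, hHalf0]
  rw [Int.fract_neg hu]
  have hu0 : 0 < Int.fract (x / (2 * a)) := (Int.fract_nonneg _).lt_of_ne' hu
  have hu1 : Int.fract (x / (2 * a)) < 1 := Int.fract_lt_one _
  split_ifs with h₁ h₂ h₂
  · have hmid : 2 * a * Int.fract (x / (2 * a)) = a := by nlinarith
    rw [mul_one_sub, hmid, show 2 * a - a = a by ring, hHalfa, neg_zero]
  · rw [neg_neg]
    ring_nf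
  · ring_nf
  · nlinarith

lemma genPi_sub_le_genSin (hp : 2 ≤ p) (hq : 2 ≤ q) (hx : genPi p q ≤ x) :
    genPi p q - x ≤ genSin p q x := by
  have ha := two_le_genPi hp hq
  obtain hx1 | hx1 := le_or_gt (genPi p q + 1) x
  · linarith [neg_one_le_genSin (p := p) (q := q) (x := x)]
  obtain rfl | hx0 := hx.eq_or_lt
  · rw [genSin_of_mem_Icc (by linarith) (by linarith) le_rfl, sub_self]
    exact sinHalf_nonneg
  have hhalf : ¬ 2 * genPi p q - x ≤ genPi p q / 2 := by linarith
  rw [genSin_of_mem_Ioo hx0 (by linarith), sinHalf, if_neg hhalf,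
    show genPi p q - (2 * genPi p q - x) = x - genPi p q by ring]
  linarith [sinBase_le_self hp hq (x := x - genPi p q) (by linarith)]

end GenSin

section RedhefferSin

variable {a x : ℝ}

lemma redheffer_sin_of_le_half (ha2 : 2 ≤ a) (ha : a ≤ 63 / 20) (hx0 : 0 ≤ x) (hx : x ≤ a / 2) :
    (a ^ 2 - x ^ 2) * x ≤ sin x * (a ^ 2 + x ^ 2) := by
  set B := 2 - a ^ 2 / 6 + x ^ 2 * (a ^ 2 / 120 - 1 / 6) + x ^ 4 * (1 / 120 - a ^ 2 / 5040)
    - x ^ 6 / 5040 with hB_def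
  have hB : 0 ≤ B := by
    have hx2 : x ^ 2 ≤ a ^ 2 / 4 := by nlinarith
    have ha2' : a ^ 2 ≤ 3969 / 400 := by nlinarith
    -- the negative terms of `B` are largest at `x = a / 2`
    have hx2_coef : 0 ≤ (a ^ 2 / 4 - x ^ 2) * (1 / 6 - a ^ 2 / 120) :=
      mul_nonneg (by linarith) (by nlinarith)
    have hx4 : 0 ≤ x ^ 4 * (1 / 120 - a ^ 2 / 5040) := mul_nonneg (by positivity) (by nlinarith)
    have hx6 : x ^ 6 ≤ (a ^ 2 / 4) ^ 3 := by
      simpa [← pow_mul] using pow_le_pow_left₀ (sq_nonneg x) hx2 3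
    have hA : 0 ≤ 2 - a ^ 2 / 6 - a ^ 2 / 4 * (1 / 6 - a ^ 2 / 120) - (a ^ 2 / 4) ^ 3 / 5040 := by
      nlinarith [mul_nonneg (mul_nonneg (sq_nonneg a) (sq_nonneg a)) (sq_nonneg a)]
    nlinarith
  have hid : (x - x ^ 3 / 6 + x ^ 5 / 120 - x ^ 7 / 5040) * (a ^ 2 + x ^ 2) - (a ^ 2 - x ^ 2) * x
      = x ^ 3 * B := by
    rw [hB_def]
    ring
  linarith [mul_le_mul_of_nonneg_right (taylor7_le_sin hx0) (by positivity : 0 ≤ a ^ 2 + x ^ 2),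
    mul_nonneg (pow_nonneg hx0 3) hB]

lemma redheffer_sin_reflected (ha2 : 2 ≤ a) (ha : a ≤ 63 / 20) (hx0 : 0 ≤ x) (hx : x ≤ a / 2) :
    (a ^ 2 - (a - x) ^ 2) * (a - x) ≤ sin x * (a ^ 2 + (a - x) ^ 2) := by
  have ha2' : a ^ 2 ≤ 3969 / 400 := by nlinarith
  have hx2 : x ^ 2 ≤ a ^ 2 / 4 := by nlinarith
  have hxa : x * a ≤ a ^ 2 / 2 := by nlinarith
  set S := a ^ 2 + (a - x) ^ 2 with hS_def
  set R := x ^ 3 / 120 - x ^ 5 / 5040 with hR_def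
  have hR : 7 / 1000 * x ^ 3 ≤ R := by
    nlinarith [mul_nonneg (pow_nonneg hx0 3) (by nlinarith : (0 : ℝ) ≤ 3969 / 1600 - x ^ 2)]
  have hRS : 7 / 1000 * x ^ 3 * a ^ 2 ≤ R * S :=
    mul_le_mul hR (by nlinarith) (by positivity) (le_trans (by positivity) hR)
  have hcubic : 0 ≤ a - x / 6 * S + 7 / 1000 * x ^ 3 * a ^ 2 := by
    have hc : 0 ≤ 5 / 8 * a ^ 2 - 3 / 4 * a * x + x ^ 2 / 2
        - 21 / 1000 * a ^ 2 * (a ^ 2 / 4 + a * x / 2 + x ^ 2) := by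
      nlinarith [mul_nonneg (sq_nonneg a) (sub_nonneg.2 hx2), mul_nonneg (sq_nonneg a)
        (sub_nonneg.2 hxa), mul_nonneg (sq_nonneg a) (sub_nonneg.2 ha2'), sq_nonneg a, sq_nonneg x]
    have hc' : 5 / 16 * a ^ 3 - 21 / 8000 * a ^ 5 ≤ 3 * a := by
      nlinarith [mul_nonneg (sub_nonneg.2 (show (4 : ℝ) ≤ a ^ 2 by nlinarith)) (sq_nonneg a),
        mul_nonneg (sub_nonneg.2 ha2') (by linarith : (0 : ℝ) ≤ a), sq_nonneg a]
    nlinarith [mul_nonneg (by linarith : 0 ≤ a / 2 - x) hc]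
  have hid : (x - x ^ 3 / 6 + x ^ 5 / 120 - x ^ 7 / 5040) * S - (a ^ 2 - (a - x) ^ 2) * (a - x)
      = x ^ 2 * (a - x / 6 * S + R * S) := by
    rw [hS_def, hR_def]
    ring
  linarith [mul_le_mul_of_nonneg_right (taylor7_le_sin hx0) (by positivity : (0 : ℝ) ≤ S),
    mul_nonneg (sq_nonneg x) (by linarith : 0 ≤ a - x / 6 * S + R * S)]

end RedhefferSin

lemma redheffer_genSin_of_pos {p q x : ℝ} (hp : 2 ≤ p) (hq : 2 ≤ q) (hx : 0 < x) :
    (genPi p q ^ 2 - x ^ 2) * x ≤ genSin p q x * (genPi p q ^ 2 + x ^ 2) := by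
  set a := genPi p q
  have ha2 : 2 ≤ a := two_le_genPi hp hq
  have hapi : a ≤ π := genPi_le_pi hp hq
  have hapi' : a ≤ 63 / 20 := by linarith [pi_lt_d2]
  have hpos : 0 ≤ a ^ 2 + x ^ 2 := by positivity
  obtain hx₁ | hx₁ := le_or_gt x (a / 2)
  · have hsin : sin x ≤ genSin p q x := by
      rw [genSin_of_mem_Icc (by linarith) hx.le (by linarith), sinHalf, if_pos hx₁]
      exact sin_le_sinBase hp hq hx.le (by linarith)
    linarith [redheffer_sin_of_le_half ha2 hapi' hx.le hx₁, mul_le_mul_of_nonneg_right hsin hpos]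
  obtain hx₂ | hx₂ := le_or_gt x a
  · have hsin : sin (a - x) ≤ genSin p q x := by
      rw [genSin_of_mem_Icc (by linarith) hx.le hx₂, sinHalf, if_neg (not_le.2 hx₁)]
      exact sin_le_sinBase hp hq (by linarith) (by linarith)
    have h := redheffer_sin_reflected ha2 hapi' (x := a - x) (by linarith) (by linarith)
    rw [sub_sub_cancel] at h
    linarith [mul_le_mul_of_nonneg_right hsin hpos]
  · linarith [mul_le_mul_of_nonneg_right (genPi_sub_le_genSin hp hq hx₂.le) hpos,
      mul_nonneg (by linarith : (0 : ℝ) ≤ a) (sq_nonneg (a - x))]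

lemma redheffer_genSin {p q x : ℝ} (hp : 2 ≤ p) (hq : 2 ≤ q) (hx : x ≠ 0) :
    (genPi p q ^ 2 - x ^ 2) / (genPi p q ^ 2 + x ^ 2) ≤ genSin p q x / x := by
  have ha := two_le_genPi hp hq
  have hpos : 0 < genPi p q ^ 2 + x ^ 2 := by positivity
  obtain hx | hx := hx.lt_or_gt
  · have h := redheffer_genSin_of_pos hp hq (neg_pos.2 hx)
    rw [genSin_neg (by linarith) (sinBase_zero hp hq)] at h
    rw [← neg_div_neg_eq (genSin p q x), div_le_div_iff₀ hpos (neg_pos.2 hx)]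
    linarith
  · rw [div_le_div_iff₀ hpos hx]
    exact redheffer_genSin_of_pos hp hq hx

theorem redheffer_sinp (p : ℝ) (hp : 2 ≤ p) :
    ∀ x : ℝ, x ≠ 0 →
      (genPi p p ^ 2 - x ^ 2) / (genPi p p ^ 2 + x ^ 2) ≤ genSin p p x / x :=
  fun _ hx => redheffer_genSin hp hp hx
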